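/- arXiv:1706.09999 — 2 statements merged into one kernel-verified Lean document; each statement's English description precedes it below -/
import Mathlib

section
/- Let W be a module over U(gl(V)) and M a module over U(q(V)) (for q = q(n) ⊂ gl(V) as above), and let Ω = Σ_{1≤i,j≤n} (ẽ_{i,j}^0 ⊗ e_{j,i}^0 + ẽ_{i,j}^1 ⊗ e_{j,i}^1) ∈ U(gl) ⊗ U(q). Then the map W ⊗ M → W ⊗ M given by w ⊗ m ↦ Σ_{i,j} ẽ_{i,j}^0.w ⊗ e_{j,i}^0.m + (-1)^{|w|} ẽ_{i,j}^1.w ⊗ e_{j,i}^1.m is an even homomorphism of U(q)-supermodules, where W ⊗ M carries the U(q)-action via the coproduct x.(w⊗m) = x.w ⊗ m + (-1)^{|x||w|} w ⊗ x.m. -/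
/-!
Write `σ` for the parity involution of `W`. The sign `(-1)^{|w|}` in the action of `Ω` and the
Koszul sign in the coproduct are both realised by powers of `σ`, so `Ω` and the diagonal action
`Δ(x)` of `x = e_{i,j}^ε` become elements of the ordinary tensor product algebra
`End W ⊗ End M`, and it suffices to show that they commute there. The commutator of
`ẽ_{p,q}^δ σ^δ ⊗ e_{q,p}^δ` with `Δ(x)` is, up to sign,
`[ẽ_{p,q}^δ, x] σ^δ ⊗ e_{q,p}^δ + ẽ_{p,q}^δ σ^{δ+ε} ⊗ [e_{q,p}^δ, x]` (super brackets). Each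
bracket is a combination of two basis vectors with Kronecker-delta coefficients, and after
summing over `p, q` the resulting double sums cancel in pairs once the parity index `δ` is
shifted by `ε`.
-/

open Matrix
open scoped TensorProduct

namespace CasimirQ

/-- Index set for the homogeneous basis of the natural supermodule of `gl(n|n)`:
even indices `Sum.inl i` and odd indices `Sum.inr i` (`ī`). -/
abbrev I (n : ℕ) := Fin n ⊕ Fin n

/-- The parity-preserving (even) part of a matrix in `gl(V)`. -/
def evenPart {k : Type*} [Zero k] {n : ℕ} (x : Matrix (I n) (I n) k) :
    Matrix (I n) (I n) k :=
  Matrix.of fun a b => if a.isLeft = b.isLeft then x a b else 0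

/-- The parity-reversing (odd) part of a matrix in `gl(V)`. -/
def oddPart {k : Type*} [Zero k] {n : ℕ} (x : Matrix (I n) (I n) k) :
    Matrix (I n) (I n) k :=
  Matrix.of fun a b => if a.isLeft = b.isLeft then 0 else x a b

/-- `x` is homogeneous of parity `ε`. -/
def IsHomog {k : Type*} [Zero k] {n : ℕ} (x : Matrix (I n) (I n) k) (ε : ZMod 2) :
    Prop :=
  (ε = 0 ∧ oddPart x = 0) ∨ (ε = 1 ∧ evenPart x = 0)

/-- The basis `e_{i,j}^ε` of `q(n) ⊂ gl(n|n)`: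
`e_{i,j}^0 = e_{i,j} + e_{ī,j̄}` and `e_{i,j}^1 = e_{ī,j} + e_{i,j̄}`. -/
def eMat {k : Type*} [Ring k] {n : ℕ} (ε : ZMod 2) (i j : Fin n) :
    Matrix (I n) (I n) k :=
  if ε = 0 then
    Matrix.single (Sum.inl i) (Sum.inl j) 1 + Matrix.single (Sum.inr i) (Sum.inr j) 1
  else
    Matrix.single (Sum.inr i) (Sum.inl j) 1 + Matrix.single (Sum.inl i) (Sum.inr j) 1

/-- The complementary elements `ẽ_{i,j}^ε` of `gl(n|n)`:
`ẽ_{i,j}^0 = e_{i,j} − e_{ī,j̄}` and `ẽ_{i,j}^1 = e_{ī,j} − e_{i,j̄}`. -/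
def etMat {k : Type*} [Ring k] {n : ℕ} (ε : ZMod 2) (i j : Fin n) :
    Matrix (I n) (I n) k :=
  if ε = 0 then
    Matrix.single (Sum.inl i) (Sum.inl j) 1 - Matrix.single (Sum.inr i) (Sum.inr j) 1
  else
    Matrix.single (Sum.inr i) (Sum.inl j) 1 - Matrix.single (Sum.inl i) (Sum.inr j) 1

section Super

variable (k : Type*) [Field k]
variable (U₀ U₁ : Type*) [AddCommGroup U₀] [Module k U₀] [AddCommGroup U₁] [Module k U₁]

/-- Projection of the superspace `U₀ × U₁` onto its even part. -/
def p0 : (U₀ × U₁) →ₗ[k] (U₀ × U₁) :=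
  (LinearMap.inl k U₀ U₁).comp (LinearMap.fst k U₀ U₁)

/-- Projection of the superspace `U₀ × U₁` onto its odd part. -/
def p1 : (U₀ × U₁) →ₗ[k] (U₀ × U₁) :=
  (LinearMap.inr k U₀ U₁).comp (LinearMap.snd k U₀ U₁)

/-- The parity involution `u ↦ (-1)^{|u|} u` of the superspace `U₀ × U₁`. -/
def sigma : (U₀ × U₁) →ₗ[k] (U₀ × U₁) :=
  p0 k U₀ U₁ + (-1 : k) • p1 k U₀ U₁

/-- An operator on the superspace `U₀ × U₁` is even if it preserves parities. -/
def IsEvenOp (T : (U₀ × U₁) →ₗ[k] (U₀ × U₁)) : Prop :=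
  (p1 k U₀ U₁) ∘ₗ T ∘ₗ (p0 k U₀ U₁) = 0 ∧ (p0 k U₀ U₁) ∘ₗ T ∘ₗ (p1 k U₀ U₁) = 0

/-- An operator on the superspace `U₀ × U₁` is odd if it reverses parities. -/
def IsOddOp (T : (U₀ × U₁) →ₗ[k] (U₀ × U₁)) : Prop :=
  (p0 k U₀ U₁) ∘ₗ T ∘ₗ (p0 k U₀ U₁) = 0 ∧ (p1 k U₀ U₁) ∘ₗ T ∘ₗ (p1 k U₀ U₁) = 0

end Super

lemma zmod_two_cases (δ : ZMod 2) : δ = 0 ∨ δ = 1 := by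
  revert δ; decide

lemma sum_zmod_two {M : Type*} [AddCommMonoid M] (f : ZMod 2 → M) : ∑ δ, f δ = f 0 + f 1 :=
  Fin.sum_univ_two f

section Parity

variable {k : Type*} [Ring k]

def paritySign (δ : ZMod 2) : k := (-1) ^ δ.val

lemma paritySign_mul_self (δ : ZMod 2) : (paritySign δ : k) * paritySign δ = 1 := by
  rcases zmod_two_cases δ with rfl | rfl <;> simp [paritySign, ZMod.val_one]

lemma paritySign_add_mul_self (δ ε : ZMod 2) :
    (paritySign ((δ + ε) * ε) : k) = paritySign (δ * ε) * paritySign ε := by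
  rcases zmod_two_cases δ with rfl | rfl <;> rcases zmod_two_cases ε with rfl | rfl <;>
    simp [paritySign, CharTwo.add_self_eq_zero, ZMod.val_one]

variable {R : Type*} [Monoid R]

def parityPow (σ : R) (δ : ZMod 2) : R := σ ^ δ.val

lemma parityPow_add {σ : R} (hσ : σ * σ = 1) (δ ε : ZMod 2) :
    parityPow σ (δ + ε) = parityPow σ δ * parityPow σ ε := by
  rcases zmod_two_cases δ with rfl | rfl <;> rcases zmod_two_cases ε with rfl | rfl <;>
    simp [parityPow, hσ, CharTwo.add_self_eq_zero, ZMod.val_one]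

end Parity

section Casimir

open TensorProduct

variable {k R S : Type*} [CommRing k] [Ring R] [Algebra k R] [Ring S] [Algebra k S] {n : ℕ}

lemma parityPow_mul_eq_smul {σ T : R} {ε : ZMod 2}
    (h : σ * T = (paritySign ε : k) • (T * σ)) (δ : ZMod 2) :
    parityPow σ δ * T = (paritySign (δ * ε) : k) • (T * parityPow σ δ) := by
  rcases zmod_two_cases δ with rfl | rfl <;> simp [parityPow, paritySign, h, ZMod.val_one]

def casimir (σ : R) (a : ZMod 2 → Fin n → Fin n → R) (b : ZMod 2 → Fin n → Fin n → S) :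
    R ⊗[k] S :=
  ∑ δ, ∑ p, ∑ q, (a δ p q * parityPow σ δ) ⊗ₜ b δ q p

def coproduct (σ : R) (ε : ZMod 2) (x : R) (y : S) : R ⊗[k] S :=
  x ⊗ₜ 1 + parityPow σ ε ⊗ₜ y

lemma casimir_term_commutator {σ x : R} {y : S} {ε δ : ZMod 2} {a : R} (b : S)
    (hσ : σ * σ = 1) (hσx : σ * x = (paritySign ε : k) • (x * σ))
    (hσa : σ * a = (paritySign δ : k) • (a * σ)) :
    (a * parityPow σ δ) ⊗ₜ[k] b * coproduct σ ε x y
        - coproduct σ ε x y * (a * parityPow σ δ) ⊗ₜ[k] b =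
      (paritySign (δ * ε) : k) •
          ((a * x - (paritySign (δ * ε) : k) • (x * a)) * parityPow σ δ) ⊗ₜ b
        + (a * parityPow σ (δ + ε)) ⊗ₜ (b * y - (paritySign (δ * ε) : k) • (y * b)) := by
  have hx := parityPow_mul_eq_smul hσx δ
  have ha := parityPow_mul_eq_smul hσa ε
  rw [mul_comm ε δ] at ha
  have hax :
      a * parityPow σ δ * x = (paritySign (δ * ε) : k) • (a * x * parityPow σ δ) := by
    rw [mul_assoc, hx, mul_smul_comm, ← mul_assoc]
  have hpow : a * parityPow σ δ * parityPow σ ε = a * parityPow σ (δ + ε) := by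
    rw [mul_assoc, parityPow_add hσ]
  have hpowa : parityPow σ ε * (a * parityPow σ δ) =
      (paritySign (δ * ε) : k) • (a * parityPow σ (δ + ε)) := by
    rw [← mul_assoc, ha, smul_mul_assoc, mul_assoc, ← parityPow_add hσ, add_comm]
  simp only [coproduct, mul_add, add_mul, Algebra.TensorProduct.tmul_mul_tmul, mul_one, one_mul,
    hax, hpow, hpowa, sub_mul, smul_mul_assoc, mul_assoc, sub_tmul, tmul_sub, smul_tmul',
    tmul_smul, smul_sub, smul_smul, paritySign_mul_self, one_smul]
  abel

theorem commute_casimir_coproduct {σ x : R} {y : S} {ε : ZMod 2} {i j : Fin n}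
    {a : ZMod 2 → Fin n → Fin n → R} {b : ZMod 2 → Fin n → Fin n → S}
    (hσ : σ * σ = 1) (hσx : σ * x = (paritySign ε : k) • (x * σ))
    (hσa : ∀ δ p q, σ * a δ p q = (paritySign δ : k) • (a δ p q * σ))
    (hax : ∀ δ p q, a δ p q * x - (paritySign (δ * ε) : k) • (x * a δ p q) =
      (if q = i then (paritySign ε : k) • a (δ + ε) p j else 0)
        - (paritySign (δ * ε) : k) • (if j = p then a (δ + ε) i q else 0))
    (hby : ∀ δ q p, b δ q p * y - (paritySign (δ * ε) : k) • (y * b δ q p) =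
      (if p = i then b (δ + ε) q j else 0)
        - (paritySign (δ * ε) : k) • (if j = q then b (δ + ε) i p else 0)) :
    Commute (casimir (k := k) σ a b) (coproduct σ ε x y) := by
  rw [Commute, SemiconjBy, ← sub_eq_zero]
  simp only [casimir, Finset.sum_mul, Finset.mul_sum, ← Finset.sum_sub_distrib,
    casimir_term_commutator _ hσ hσx (hσa _ _ _), hax, hby]
  simp only [smul_sub, sub_mul, ite_mul, zero_mul, smul_mul_assoc, sub_tmul, tmul_sub, ite_tmul,
    tmul_ite, smul_ite, smul_zero, smul_tmul', tmul_smul, smul_smul, Finset.sum_add_distrib,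
    Finset.sum_sub_distrib, Finset.sum_ite_irrel, Finset.sum_const_zero, Finset.sum_ite_eq,
    Finset.sum_ite_eq', Finset.mem_univ, if_true, paritySign_mul_self, one_smul]
  have shift (f : ZMod 2 → R ⊗[k] S) : ∑ δ, f (δ + ε) = ∑ δ, f δ :=
    Equiv.sum_comp (Equiv.addRight ε) f
  rw [← shift fun δ => ∑ q, (a δ i q * parityPow σ (δ + ε)) ⊗ₜ[k] b (δ + ε) q j,
    ← shift fun δ => ∑ p,
      (paritySign (δ * ε) • (a δ p j * parityPow σ (δ + ε))) ⊗ₜ[k] b (δ + ε) i p]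
  simp only [add_assoc, CharTwo.add_self_eq_zero, add_zero, paritySign_add_mul_self]
  abel

variable {W M : Type*} [AddCommGroup W] [Module k W] [AddCommGroup M] [Module k M]

lemma endTensorEndAlgHom_casimir (σ : Module.End k W)
    (a : ZMod 2 → Fin n → Fin n → Module.End k W)
    (b : ZMod 2 → Fin n → Fin n → Module.End k M) :
    Module.endTensorEndAlgHom (S := k) (casimir σ a b) =
      ∑ p, ∑ q, (TensorProduct.map (a 0 p q) (b 0 q p) +
        TensorProduct.map (a 1 p q ∘ₗ σ) (b 1 q p)) := by
  simp only [casimir, sum_zmod_two, Finset.sum_add_distrib, map_add, map_sum,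
    Module.endTensorEndAlgHom_apply, AlgebraTensorModule.map_eq, parityPow, ZMod.val_zero,
    ZMod.val_one, pow_zero, pow_one, Module.End.mul_eq_comp, Module.End.one_eq_id,
    LinearMap.comp_id]

lemma endTensorEndAlgHom_coproduct (σ : Module.End k W) (ε : ZMod 2) (x : Module.End k W)
    (y : Module.End k M) :
    Module.endTensorEndAlgHom (S := k) (coproduct σ ε x y) =
      TensorProduct.map x LinearMap.id +
        TensorProduct.map (if ε = 0 then LinearMap.id else σ) y := by
  rcases zmod_two_cases ε with rfl | rfl <;>
    simp [coproduct, parityPow, Module.endTensorEndAlgHom_apply, AlgebraTensorModule.map_eq,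
      ZMod.val_one, Module.End.one_eq_id]

end Casimir

section Matrices

variable {k : Type*} [Ring k] {n : ℕ}

lemma eMat_mul_eMat (ε ε' : ZMod 2) (i j p q : Fin n) :
    (eMat ε i j : Matrix (I n) (I n) k) * eMat ε' p q =
      if j = p then eMat (ε + ε') i q else 0 := by
  rcases zmod_two_cases ε with rfl | rfl <;> rcases zmod_two_cases ε' with rfl | rfl <;>
    by_cases h : j = p <;>
    simp [eMat, add_mul, mul_add, h, CharTwo.add_self_eq_zero]

lemma eMat_mul_etMat (ε δ : ZMod 2) (i j p q : Fin n) :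
    (eMat ε i j : Matrix (I n) (I n) k) * etMat δ p q =
      if j = p then etMat (ε + δ) i q else 0 := by
  rcases zmod_two_cases ε with rfl | rfl <;> rcases zmod_two_cases δ with rfl | rfl <;>
    by_cases h : j = p <;>
    simp [eMat, etMat, add_mul, mul_sub, h, CharTwo.add_self_eq_zero]

lemma etMat_mul_eMat (δ ε : ZMod 2) (p q i j : Fin n) :
    (etMat δ p q : Matrix (I n) (I n) k) * eMat ε i j =
      if q = i then (paritySign ε : k) • etMat (δ + ε) p j else 0 := by
  rcases zmod_two_cases δ with rfl | rfl <;> rcases zmod_two_cases ε with rfl | rfl <;>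
    by_cases h : q = i <;>
    simp [eMat, etMat, paritySign, sub_mul, mul_add, h, CharTwo.add_self_eq_zero,
      ZMod.val_one] <;>
    abel

lemma isHomog_eMat (ε : ZMod 2) (i j : Fin n) :
    IsHomog (eMat ε i j : Matrix (I n) (I n) k) ε := by
  rcases zmod_two_cases ε with rfl | rfl
  · refine Or.inl ⟨rfl, ?_⟩
    ext (a | a) (b | b) <;> simp [oddPart, eMat, single]
  · refine Or.inr ⟨rfl, ?_⟩
    ext (a | a) (b | b) <;> simp [evenPart, eMat, single]

lemma isHomog_etMat (ε : ZMod 2) (i j : Fin n) :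
    IsHomog (etMat ε i j : Matrix (I n) (I n) k) ε := by
  rcases zmod_two_cases ε with rfl | rfl
  · refine Or.inl ⟨rfl, ?_⟩
    ext (a | a) (b | b) <;> simp [oddPart, etMat, single]
  · refine Or.inr ⟨rfl, ?_⟩
    ext (a | a) (b | b) <;> simp [evenPart, etMat, single]

end Matrices

section Representation

variable {k : Type*} [CommRing k] {n : ℕ} {V : Type*} [AddCommGroup V] [Module k V]
  {ρ : Matrix (I n) (I n) k →ₗ[k] Module.End k V}

lemma rep_etMat_commutator
    (hrep : ∀ (ε ε' : ZMod 2) (x y : Matrix (I n) (I n) k), IsHomog x ε → IsHomog y ε' →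
      ρ (x * y - (paritySign (ε * ε') : k) • (y * x)) =
        ρ x * ρ y - (paritySign (ε * ε') : k) • (ρ y * ρ x))
    (ε : ZMod 2) (i j : Fin n) (δ : ZMod 2) (p q : Fin n) :
    ρ (etMat δ p q) * ρ (eMat ε i j)
        - (paritySign (δ * ε) : k) • (ρ (eMat ε i j) * ρ (etMat δ p q)) =
      (if q = i then (paritySign ε : k) • ρ (etMat (δ + ε) p j) else 0)
        - (paritySign (δ * ε) : k) • (if j = p then ρ (etMat (δ + ε) i q) else 0) := by
  rw [← hrep δ ε _ _ (isHomog_etMat δ p q) (isHomog_eMat ε i j), etMat_mul_eMat,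
    eMat_mul_etMat, add_comm ε δ]
  simp only [map_sub, map_smul, apply_ite ρ, map_zero]

lemma rep_eMat_commutator
    (hrep : ∀ (ε ε' : ZMod 2) (i j p q : Fin n),
      ρ (eMat ε i j * eMat ε' p q
          - (paritySign (ε * ε') : k) • (eMat ε' p q * eMat ε i j)) =
        ρ (eMat ε i j) * ρ (eMat ε' p q) -
          (paritySign (ε * ε') : k) • (ρ (eMat ε' p q) * ρ (eMat ε i j)))
    (ε : ZMod 2) (i j : Fin n) (δ : ZMod 2) (q p : Fin n) :
    ρ (eMat δ q p) * ρ (eMat ε i j)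
        - (paritySign (δ * ε) : k) • (ρ (eMat ε i j) * ρ (eMat δ q p)) =
      (if p = i then ρ (eMat (δ + ε) q j) else 0)
        - (paritySign (δ * ε) : k) • (if j = q then ρ (eMat (δ + ε) i p) else 0) := by
  rw [← hrep, eMat_mul_eMat, eMat_mul_eMat, add_comm ε δ]
  simp only [map_sub, map_smul, apply_ite ρ, map_zero]

end Representation

section Superspace

variable {k : Type*} [Field k] {n : ℕ}
variable {U₀ U₁ : Type*} [AddCommGroup U₀] [Module k U₀] [AddCommGroup U₁] [Module k U₁]

lemma p0_add_p1 : p0 k U₀ U₁ + p1 k U₀ U₁ = 1 := by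
  ext x <;> simp [p0, p1]

lemma sigma_eq_p0_sub_p1 : sigma k U₀ U₁ = p0 k U₀ U₁ - p1 k U₀ U₁ := by
  ext x <;> simp [sigma, p0, p1]

lemma sigma_mul_sigma : sigma k U₀ U₁ * sigma k U₀ U₁ = 1 := by
  ext x <;> simp [sigma, p0, p1]

lemma sigma_mul_of_isEvenOp {T : Module.End k (U₀ × U₁)} (hT : IsEvenOp k U₀ U₁ T) :
    sigma k U₀ U₁ * T = T * sigma k U₀ U₁ := by
  have h10 : p1 k U₀ U₁ * (T * p0 k U₀ U₁) = 0 := hT.1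
  have h01 : p0 k U₀ U₁ * (T * p1 k U₀ U₁) = 0 := hT.2
  calc sigma k U₀ U₁ * T
    _ = (p0 k U₀ U₁ - p1 k U₀ U₁) * T * (p0 k U₀ U₁ + p1 k U₀ U₁) := by
        rw [sigma_eq_p0_sub_p1, p0_add_p1, mul_one]
    _ = (p0 k U₀ U₁ + p1 k U₀ U₁) * T * (p0 k U₀ U₁ - p1 k U₀ U₁) := by
        simp only [add_mul, mul_add, sub_mul, mul_sub, mul_assoc, h10, h01]
        abel
    _ = T * sigma k U₀ U₁ := by rw [sigma_eq_p0_sub_p1, p0_add_p1, one_mul]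

lemma sigma_mul_of_isOddOp {T : Module.End k (U₀ × U₁)} (hT : IsOddOp k U₀ U₁ T) :
    sigma k U₀ U₁ * T = -(T * sigma k U₀ U₁) := by
  have h00 : p0 k U₀ U₁ * (T * p0 k U₀ U₁) = 0 := hT.1
  have h11 : p1 k U₀ U₁ * (T * p1 k U₀ U₁) = 0 := hT.2
  calc sigma k U₀ U₁ * T
    _ = (p0 k U₀ U₁ - p1 k U₀ U₁) * T * (p0 k U₀ U₁ + p1 k U₀ U₁) := by
        rw [sigma_eq_p0_sub_p1, p0_add_p1, mul_one]
    _ = -((p0 k U₀ U₁ + p1 k U₀ U₁) * T * (p0 k U₀ U₁ - p1 k U₀ U₁)) := by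
        simp only [add_mul, mul_add, sub_mul, mul_sub, mul_assoc, h00, h11]
        abel
    _ = -(T * sigma k U₀ U₁) := by rw [sigma_eq_p0_sub_p1, p0_add_p1, one_mul]

lemma sigma_mul_of_isHomog {ρ : Matrix (I n) (I n) k →ₗ[k] Module.End k (U₀ × U₁)}
    (heven : ∀ x : Matrix (I n) (I n) k, oddPart x = 0 → IsEvenOp k U₀ U₁ (ρ x))
    (hodd : ∀ x : Matrix (I n) (I n) k, evenPart x = 0 → IsOddOp k U₀ U₁ (ρ x))
    {x : Matrix (I n) (I n) k} {δ : ZMod 2} (hx : IsHomog x δ) :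
    sigma k U₀ U₁ * ρ x = (paritySign δ : k) • (ρ x * sigma k U₀ U₁) := by
  rcases hx with ⟨rfl, hx⟩ | ⟨rfl, hx⟩
  · simpa [paritySign] using sigma_mul_of_isEvenOp (heven x hx)
  · rw [sigma_mul_of_isOddOp (hodd x hx)]
    simp only [paritySign, ZMod.val_one, pow_one]
    module

end Superspace

theorem casimir_is_supermodule_hom_general
    (k : Type*) [Field k] (n : ℕ)
    (W₀ W₁ M₀ M₁ : Type*)
    [AddCommGroup W₀] [Module k W₀] [AddCommGroup W₁] [Module k W₁]
    [AddCommGroup M₀] [Module k M₀] [AddCommGroup M₁] [Module k M₁]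
    (ρW : Matrix (I n) (I n) k →ₗ[k] ((W₀ × W₁) →ₗ[k] (W₀ × W₁)))
    (ρM : Matrix (I n) (I n) k →ₗ[k] ((M₀ × M₁) →ₗ[k] (M₀ × M₁)))
    -- `ρW` is a superrepresentation of the Lie superalgebra `gl(n|n)`:
    (hWeven : ∀ x : Matrix (I n) (I n) k, oddPart x = 0 → IsEvenOp k W₀ W₁ (ρW x))
    (hWodd : ∀ x : Matrix (I n) (I n) k, evenPart x = 0 → IsOddOp k W₀ W₁ (ρW x))
    (hWrep : ∀ (ε ε' : ZMod 2) (x y : Matrix (I n) (I n) k),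
      IsHomog x ε → IsHomog y ε' →
      ρW (x * y - ((-1 : k) ^ ((ε * ε').val)) • (y * x)) =
        ρW x ∘ₗ ρW y - ((-1 : k) ^ ((ε * ε').val)) • (ρW y ∘ₗ ρW x))
    -- `ρM` is a superrepresentation of `q(n)` (specified on the basis `e_{i,j}^ε`):
    (hMrep : ∀ (ε ε' : ZMod 2) (i j p q : Fin n),
      ρM (eMat ε i j * eMat ε' p q -
            ((-1 : k) ^ ((ε * ε').val)) • (eMat ε' p q * eMat ε i j)) =
        ρM (eMat ε i j) ∘ₗ ρM (eMat ε' p q) -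
          ((-1 : k) ^ ((ε * ε').val)) • (ρM (eMat ε' p q) ∘ₗ ρM (eMat ε i j))) :
    ∀ (ε : ZMod 2) (i j : Fin n),
      (∑ p : Fin n, ∑ q : Fin n,
          (TensorProduct.map (ρW (etMat 0 p q)) (ρM (eMat 0 q p)) +
           TensorProduct.map (ρW (etMat 1 p q) ∘ₗ sigma k W₀ W₁) (ρM (eMat 1 q p)))) ∘ₗ
        (TensorProduct.map (ρW (eMat ε i j)) LinearMap.id +
         TensorProduct.map (if ε = 0 then LinearMap.id else sigma k W₀ W₁)
           (ρM (eMat ε i j)))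
      =
      (TensorProduct.map (ρW (eMat ε i j)) LinearMap.id +
       TensorProduct.map (if ε = 0 then LinearMap.id else sigma k W₀ W₁)
         (ρM (eMat ε i j))) ∘ₗ
        (∑ p : Fin n, ∑ q : Fin n,
          (TensorProduct.map (ρW (etMat 0 p q)) (ρM (eMat 0 q p)) +
           TensorProduct.map (ρW (etMat 1 p q) ∘ₗ sigma k W₀ W₁) (ρM (eMat 1 q p)))) := by
  intro ε i j
  have key := commute_casimir_coproduct (k := k) (σ := sigma k W₀ W₁)
    (a := fun δ p q => ρW (etMat δ p q)) (b := fun δ q p => ρM (eMat δ q p))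
    (x := ρW (eMat ε i j)) (y := ρM (eMat ε i j)) sigma_mul_sigma
    (sigma_mul_of_isHomog hWeven hWodd (isHomog_eMat ε i j))
    (fun δ p q => sigma_mul_of_isHomog hWeven hWodd (isHomog_etMat δ p q))
    (rep_etMat_commutator hWrep ε i j) (rep_eMat_commutator hMrep ε i j)
  have hmap := key.map (Module.endTensorEndAlgHom (S := k))
  rw [endTensorEndAlgHom_casimir, endTensorEndAlgHom_coproduct] at hmap
  exact hmap.eq

/-- Let `W` be a `U(gl)`-supermodule (given by a superrepresentation `ρW`
of the Lie superalgebra `gl(n|n)` of matrices), `M` a `U(q)`-supermodule (given by a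
superrepresentation `ρM` of `q(n)`, specified on the basis `e_{i,j}^ε`), and
`Ω = Σ_{i,j} ẽ_{i,j}^0 ⊗ e_{j,i}^0 + ẽ_{i,j}^1 ⊗ e_{j,i}^1` the Casimir element.  Then
the operator `w ⊗ m ↦ Σ_{i,j} ẽ_{i,j}^0.w ⊗ e_{j,i}^0.m + (-1)^{|w|} ẽ_{i,j}^1.w ⊗
e_{j,i}^1.m` on `W ⊗ M` is an even homomorphism of `U(q)`-supermodules: it commutes
with the diagonal action `x.(w⊗m) = x.w ⊗ m + (-1)^{|x||w|} w ⊗ x.m` of every basis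
element `x = e_{i,j}^ε` of `q(n)`. -/
theorem casimir_is_supermodule_hom
    (k : Type*) [Field k] (h2 : (2 : k) ≠ 0) (s : k) (hs : s ^ 2 = -1) (n : ℕ)
    (W₀ W₁ M₀ M₁ : Type*)
    [AddCommGroup W₀] [Module k W₀] [AddCommGroup W₁] [Module k W₁]
    [AddCommGroup M₀] [Module k M₀] [AddCommGroup M₁] [Module k M₁]
    (ρW : Matrix (I n) (I n) k →ₗ[k] ((W₀ × W₁) →ₗ[k] (W₀ × W₁)))
    (ρM : Matrix (I n) (I n) k →ₗ[k] ((M₀ × M₁) →ₗ[k] (M₀ × M₁)))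
    -- `ρW` is a superrepresentation of the Lie superalgebra `gl(n|n)`:
    (hWeven : ∀ x : Matrix (I n) (I n) k, oddPart x = 0 → IsEvenOp k W₀ W₁ (ρW x))
    (hWodd : ∀ x : Matrix (I n) (I n) k, evenPart x = 0 → IsOddOp k W₀ W₁ (ρW x))
    (hWrep : ∀ (ε ε' : ZMod 2) (x y : Matrix (I n) (I n) k),
      IsHomog x ε → IsHomog y ε' →
      ρW (x * y - ((-1 : k) ^ ((ε * ε').val)) • (y * x)) =
        ρW x ∘ₗ ρW y - ((-1 : k) ^ ((ε * ε').val)) • (ρW y ∘ₗ ρW x))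
    -- `ρM` is a superrepresentation of `q(n)` (specified on the basis `e_{i,j}^ε`):
    (hMeven : ∀ i j : Fin n, IsEvenOp k M₀ M₁ (ρM (eMat 0 i j)))
    (hModd : ∀ i j : Fin n, IsOddOp k M₀ M₁ (ρM (eMat 1 i j)))
    (hMrep : ∀ (ε ε' : ZMod 2) (i j p q : Fin n),
      ρM (eMat ε i j * eMat ε' p q -
            ((-1 : k) ^ ((ε * ε').val)) • (eMat ε' p q * eMat ε i j)) =
        ρM (eMat ε i j) ∘ₗ ρM (eMat ε' p q) -
          ((-1 : k) ^ ((ε * ε').val)) • (ρM (eMat ε' p q) ∘ₗ ρM (eMat ε i j))) :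
    ∀ (ε : ZMod 2) (i j : Fin n),
      (∑ p : Fin n, ∑ q : Fin n,
          (TensorProduct.map (ρW (etMat 0 p q)) (ρM (eMat 0 q p)) +
           TensorProduct.map (ρW (etMat 1 p q) ∘ₗ sigma k W₀ W₁) (ρM (eMat 1 q p)))) ∘ₗ
        (TensorProduct.map (ρW (eMat ε i j)) LinearMap.id +
         TensorProduct.map (if ε = 0 then LinearMap.id else sigma k W₀ W₁)
           (ρM (eMat ε i j)))
      =
      (TensorProduct.map (ρW (eMat ε i j)) LinearMap.id +
       TensorProduct.map (if ε = 0 then LinearMap.id else sigma k W₀ W₁)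
         (ρM (eMat ε i j))) ∘ₗ
        (∑ p : Fin n, ∑ q : Fin n,
          (TensorProduct.map (ρW (etMat 0 p q)) (ρM (eMat 0 q p)) +
           TensorProduct.map (ρW (etMat 1 p q) ∘ₗ sigma k W₀ W₁) (ρM (eMat 1 q p)))) :=
  casimir_is_supermodule_hom_general k n W₀ W₁ M₀ M₁ ρW ρM hWeven hWodd hWrep hMrep

end CasimirQ
end

section
/- Let k have characteristic zero and let T_r ⊂ End(V^{⊗r}) be the image of the Sergeev superalgebra Ser_r acting on V^{⊗r}, where V = k^{n|n} is the natural q(n)-supermodule: Σ_r acts by signed place permutations and c_i acts by applying the odd map c in the i-th tensor factor. If n ≥ r then the representation Ser_r → End_{U(q(n))}(V^{⊗r}) is injective. -/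
namespace SchurWeylSergeev

/-- Index set for the homogeneous basis `v_1,…,v_n` (even) and `v_{1̄},…,v_{n̄}` (odd)
of the natural `q(n)`-supermodule `V = k^{n|n}`. -/
abbrev I (n : ℕ) := Fin n ⊕ Fin n

/-- Parity (as an exponent in `{0,1}`) of a basis index. -/
def par {n : ℕ} : I n → ℕ := Sum.elim (fun _ => 0) (fun _ => 1)

/-- The bar involution `i ↔ ī` on basis indices. -/
def bar {n : ℕ} : I n → I n := Sum.elim Sum.inr Sum.inl

variable (k : Type*) [Field k] (n r : ℕ)

/-- The coordinate model of `V^{⊗r}`: functions on `r`-tuples of basis indices. -/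
abbrev TPow := (Fin r → I n) → k

/-- The diagonal operator multiplying the coordinate at `b` by `g b`. -/
def diag (g : (Fin r → I n) → k) : Module.End k (TPow k n r) :=
  LinearMap.pi fun b => g b • LinearMap.proj b

/-- Barring the `i`-th entry of a tuple of basis indices. -/
def barAt (i : Fin r) (b : Fin r → I n) : Fin r → I n :=
  Function.update b i (bar (b i))

/-- The coefficient of the odd operator `c` applied in the `i`-th tensor factor on the
basis vector `v_{b(0)} ⊗ ⋯ ⊗ v_{b(r-1)}`: the Koszul sign `(-1)^{Σ_{j<i} |v_{b(j)}|}`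
from moving `c` past the first factors, times the structure constant
`(-1)^{|v_{b(i)}|}·√-1` of `c(v_a) = (-1)^{|v_a|} √-1 v_{ā}` (where `s` plays the role
of `√-1`). -/
def cCoeff (s : k) (i : Fin r) (b : Fin r → I n) : k :=
  (-1 : k) ^ (∑ j ∈ Finset.univ.filter (fun j : Fin r => j < i), par (b j)) *
    ((-1 : k) ^ (par (b i)) * s)

/-- The operator `c_i = 1^{⊗(i-1)} ⊗ c ⊗ 1^{⊗(r-i)}` on `V^{⊗r}`, applying the odd map
`c` in the `i`-th tensor factor (with Koszul signs). -/
def Cop (s : k) (i : Fin r) : Module.End k (TPow k n r) :=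
  (diag k n r fun b => cCoeff k n r s i (barAt n r i b)) *
    (LinearMap.funLeft k k (barAt n r i))

/-- The Koszul sign of the signed place permutation `w` acting on the basis vector
indexed by `b`: a factor `(-1)^{|v_{b(p)}||v_{b(q)}|}` for each inversion of `w`. -/
def pSign (w : Equiv.Perm (Fin r)) (b : Fin r → I n) : k :=
  ∏ p : Fin r, ∏ q : Fin r,
    if p < q ∧ w q < w p then (-1 : k) ^ (par (b p) * par (b q)) else 1

/-- The action of `w ∈ Σ_r` on `V^{⊗r}` by signed (graded) place permutation:
`v_{b(0)} ⊗ ⋯ ⟼ ε(w,b) · v_{b(w⁻¹ 0)} ⊗ ⋯`. -/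
def Pop (w : Equiv.Perm (Fin r)) : Module.End k (TPow k n r) :=
  (diag k n r fun b => pSign k n r w (fun t => b (w t))) *
    (LinearMap.funLeft k k fun b : Fin r → I n => fun t => b (w t))

/-- The image of the standard basis element `c_S · w` of the Sergeev superalgebra
`Ser_r = C_r ⊗ kΣ_r` (`S ⊆ {1,…,r}` with the `cᵢ`, `i ∈ S`, taken in increasing
order) under the representation on `V^{⊗r}`. -/
def rep (s : k) (p : Finset (Fin r) × Equiv.Perm (Fin r)) :
    Module.End k (TPow k n r) :=
  ((p.1.sort (· ≤ ·)).map (Cop k n r s)).prod * Pop k n r p.2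

/-!
Evaluate every `c_S · w` at the basis vector `v_1 ⊗ ⋯ ⊗ v_r`, whose factors are distinct (this
is where `n ≥ r` enters) and all even. Evenness kills every Koszul sign, so `c_S · w` sends it
to `(√-1)^{|S|}` times the basis vector whose factors are those of `v_1 ⊗ ⋯ ⊗ v_r` permuted
by `w` and then barred at the places in `S`. From that tuple one reads off `S` (the odd
places) and `w` (the factors are distinct), so the images of the basis of `Ser_r` send one
vector to nonzero multiples of pairwise distinct basis vectors.
-/

open Function

section

variable {k n r}

lemma bar_involutive : Involutive (bar : I n → I n) := by
  rintro (x | x) <;> rfl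

lemma barAt_involutive (i : Fin r) : Involutive (barAt n r i) := by
  intro b
  simp [barAt, bar_involutive _]

lemma diag_mul_funLeft_single (g : (Fin r → I n) → k) {f f' : (Fin r → I n) → Fin r → I n}
    (hleft : LeftInverse f' f) (hright : RightInverse f' f) (a : Fin r → I n) :
    (diag k n r g * LinearMap.funLeft k k f) (Pi.single a 1) =
      g (f' a) • Pi.single (f' a) 1 := by
  ext b
  have hb : f b = a ↔ b = f' a := ⟨fun hb => hb ▸ (hleft b).symm, fun hb => hb ▸ hright a⟩
  simp only [diag, Module.End.mul_apply, LinearMap.pi_apply, LinearMap.smul_apply,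
    LinearMap.proj_apply, LinearMap.funLeft_apply, Pi.smul_apply, Pi.single_apply, hb,
    smul_eq_mul]
  split_ifs with hb' <;> simp [hb']

lemma Cop_single (s : k) (i : Fin r) (a : Fin r → I n) :
    Cop k n r s i (Pi.single a 1) = cCoeff k n r s i a • Pi.single (barAt n r i a) 1 := by
  rw [Cop, diag_mul_funLeft_single _ (barAt_involutive i) (barAt_involutive i),
    barAt_involutive i a]

lemma Pop_single (w : Equiv.Perm (Fin r)) (a : Fin r → I n) :
    Pop k n r w (Pi.single a 1) = pSign k n r w a • Pi.single (a ∘ w.symm) 1 := by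
  rw [Pop, diag_mul_funLeft_single _ (f' := fun b t => b (w.symm t))
    (fun b => by simp) (fun b => by simp)]
  simp [comp_def]

lemma cCoeff_of_even (s : k) {i : Fin r} {a : Fin r → I n} (ha : ∀ j ≤ i, par (a j) = 0) :
    cCoeff k n r s i a = s := by
  have hsum : ∑ j ∈ Finset.univ.filter (· < i), par (a j) = 0 :=
    Finset.sum_eq_zero fun j hj => ha j (Finset.mem_filter.mp hj).2.le
  simp [cCoeff, hsum, ha i le_rfl]

lemma pSign_of_even (w : Equiv.Perm (Fin r)) {a : Fin r → I n} (ha : ∀ j, par (a j) = 0) :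
    pSign k n r w a = 1 :=
  Finset.prod_eq_one fun p _ => Finset.prod_eq_one fun q _ => by simp [ha]

lemma list_prod_Cop_single (s : k) {a : Fin r → I n} (ha : ∀ j, par (a j) = 0) :
    ∀ l : List (Fin r), l.Pairwise (· < ·) →
      (l.map (Cop k n r s)).prod (Pi.single a 1) =
        s ^ l.length • Pi.single (fun j => if j ∈ l then bar (a j) else a j) 1
  | [], _ => by simp
  | i :: l, hil => by
    obtain ⟨hi, hl⟩ := List.pairwise_cons.mp hil
    have hbelow : ∀ j ≤ i, j ∉ l := fun j hj hjl => (hi j hjl).not_ge hj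
    have hcoeff : cCoeff k n r s i (fun j => if j ∈ l then bar (a j) else a j) = s :=
      cCoeff_of_even s fun j hj => by simp [hbelow j hj, ha j]
    have hbarAt : barAt n r i (fun j => if j ∈ l then bar (a j) else a j) =
        fun j => if j ∈ i :: l then bar (a j) else a j := by
      ext1 j
      rcases eq_or_ne j i with rfl | hji
      · simp [barAt, hbelow j le_rfl]
      · simp [barAt, hji]
    rw [List.map_cons, List.prod_cons, Module.End.mul_apply, list_prod_Cop_single s ha l hl,
      map_smul, Cop_single, hcoeff, hbarAt, smul_smul, ← pow_succ, List.length_cons]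

def markedTuple (a : Fin r → Fin n) (p : Finset (Fin r) × Equiv.Perm (Fin r)) : Fin r → I n :=
  fun j => if j ∈ p.1 then Sum.inr (a (p.2.symm j)) else Sum.inl (a (p.2.symm j))

lemma markedTuple_injective {a : Fin r → Fin n} (ha : Injective a) : Injective (markedTuple a) := by
  rintro ⟨S, w⟩ ⟨S', w'⟩ heq
  have hS : S = S' := Finset.ext fun j => by
    have hj := congrArg Sum.isRight (congrFun heq j)
    by_cases hjS : j ∈ S <;> by_cases hjS' : j ∈ S' <;> simp_all [markedTuple]
  have hw : w.symm = w'.symm := Equiv.ext fun j => ha <| by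
    have hj := congrArg (Sum.elim id id) (congrFun heq j)
    by_cases hjS : j ∈ S <;> by_cases hjS' : j ∈ S' <;> simp_all [markedTuple]
  exact Prod.ext hS (Equiv.symm_bijective.injective hw)

lemma rep_single_inl (s : k) (a : Fin r → Fin n) (p : Finset (Fin r) × Equiv.Perm (Fin r)) :
    rep k n r s p (Pi.single (Sum.inl ∘ a) 1) = s ^ p.1.card • Pi.single (markedTuple a p) 1 := by
  rw [rep, Module.End.mul_apply, Pop_single, pSign_of_even _ fun _ => rfl, one_smul,
    list_prod_Cop_single s (fun _ => rfl) _ (Finset.sortedLT_sort p.1).pairwise,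
    Finset.length_sort]
  congr 2
  ext1 j
  by_cases hj : j ∈ p.1 <;> simp [markedTuple, hj, bar]

end

theorem sergeev_representation_injective
    (s : k) (hs : s ^ 2 = -1) (h : r ≤ n) :
    LinearIndependent k
      (fun p : Finset (Fin r) × Equiv.Perm (Fin r) => rep k n r s p) := by
  have hs0 : s ≠ 0 := by
    rintro rfl
    simp at hs
  let a : Fin r → Fin n := Fin.castLE h
  refine LinearIndependent.of_comp (LinearMap.applyₗ (Pi.single (Sum.inl ∘ a) 1)) ?_
  have himage : LinearMap.applyₗ (Pi.single (Sum.inl ∘ a) 1) ∘ rep k n r s =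
      fun p => Units.mk0 s hs0 ^ p.1.card • Pi.basisFun k _ (markedTuple a p) := by
    ext1 p
    simp [rep_single_inl, Units.smul_def]
  rw [himage]
  exact ((Pi.basisFun k _).linearIndependent.comp _
    (markedTuple_injective (Fin.castLE_injective h))).units_smul _

end SchurWeylSergeev
end
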